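/- Let Q ≥ 1, W ≥ 0, β > 2, c = (Q+1)/2 + W - 1 ≥ 0, and let h ≥ 3 be an integer. Suppose g : (1, h) → ℝ satisfies |g(s)| ≤ e^{-((Q+1)/2) s} s^{-β} e^{-W s} for s ∈ (h-2, h) and g(s) = 0 otherwise. Then for every r with h-2 < r < h, ∫_r^h |g(s)| · e^{s} / (e^{r/2} √(s - r)) ds ≤ C e^{-(Q/2) r} r^{-β} e^{-W r}, with C independent of h and r. -/
import Mathlib
open MeasureTheory

theorem on_support_kernel_estimate
    (Q W β : ℝ) (hQ : 1 ≤ Q) (hW : 0 ≤ W) (hβ : 2 < β)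
    (hc : 0 ≤ (Q + 1) / 2 + W - 1) :
    ∃ C > 0, ∀ h : ℕ, 3 ≤ h → ∀ g : ℝ → ℝ,
      (∀ s ∈ Set.Ioo ((h : ℝ) - 2) (h : ℝ),
        |g s| ≤ Real.exp (-((Q + 1) / 2) * s) * s ^ (-β) * Real.exp (-(W * s))) →
      (∀ s ∈ Set.Ioo (1 : ℝ) (h : ℝ), s ∉ Set.Ioo ((h : ℝ) - 2) (h : ℝ) → g s = 0) →
      ∀ r : ℝ, (h : ℝ) - 2 < r → r < h →
        (∫ s in r..(h : ℝ), |g s| * Real.exp s / (Real.exp (r / 2) * Real.sqrt (s - r)))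
          ≤ C * Real.exp (-(Q / 2) * r) * r ^ (-β) * Real.exp (-(W * r)) := by
  refine ⟨3, by norm_num, ?_⟩
  intro h hh g hg hg0 r hr1 hr2
  have hh3 : (3 : ℝ) ≤ (h : ℝ) := by exact_mod_cast hh
  have hr0 : (0 : ℝ) < r := by linarith
  set K : ℝ := Real.exp (-(Q / 2) * r) * r ^ (-β) * Real.exp (-(W * r)) with hK
  have hKpos : 0 < K := by positivity
  set F : ℝ → ℝ := fun s => |g s| * Real.exp s / (Real.exp (r / 2) * Real.sqrt (s - r))
    with hF
  set G : ℝ → ℝ := fun s => K * (s - r) ^ (-(1/2) : ℝ) with hG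
  have hrh : r ≤ (h : ℝ) := hr2.le
  -- integrability of G
  have hGint : IntervalIntegrable G volume r (h : ℝ) := by
    have h1 : IntervalIntegrable (fun x : ℝ => x ^ (-(1/2) : ℝ)) volume 0 ((h : ℝ) - r) :=
      intervalIntegral.intervalIntegrable_rpow' (by norm_num)
    have h2 := (h1.comp_sub_right r)
    simp only [zero_add, sub_add_cancel] at h2
    exact h2.const_mul K
  -- pointwise bound off the endpoint
  have key : ∀ s ∈ Set.Icc r (h : ℝ), s ≠ (h : ℝ) → F s ≤ G s := by
    intro s hs hsne
    rcases eq_or_lt_of_le hs.1 with hsr | hsr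
    · simp [hF, hG, ← hsr, Real.zero_rpow (by norm_num : (-(1/2) : ℝ) ≠ 0)]
    · have hsh : s < (h : ℝ) := lt_of_le_of_ne hs.2 hsne
      have hs0 : 0 < s := lt_trans hr0 hsr
      have hd : 0 < s - r := sub_pos.2 hsr
      have hb := hg s ⟨lt_trans hr1 hsr, hsh⟩
      have hsq : Real.sqrt (s - r) = (s - r) ^ ((1:ℝ)/2) := Real.sqrt_eq_rpow _
      have hsqpos : 0 < Real.sqrt (s - r) := Real.sqrt_pos.2 hd
      have hrpow : (s - r) ^ (-(1/2) : ℝ) = 1 / Real.sqrt (s - r) := by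
        rw [Real.rpow_neg hd.le, hsq]; ring
      -- reduce to numerator inequality
      have core : |g s| * Real.exp s / Real.exp (r / 2) ≤ K := by
        have step1 : |g s| * Real.exp s / Real.exp (r / 2) ≤
            Real.exp (-((Q + 1) / 2) * s) * s ^ (-β) * Real.exp (-(W * s)) * Real.exp s
              / Real.exp (r / 2) := by
          gcongr
        refine step1.trans ?_
        have e1 : Real.exp (-((Q + 1) / 2) * s) * s ^ (-β) * Real.exp (-(W * s)) * Real.exp s
            / Real.exp (r / 2)
            = s ^ (-β) * Real.exp (-((Q + 1) / 2) * s + -(W * s) + s - r / 2) := by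
          rw [Real.exp_sub, Real.exp_add, Real.exp_add]; ring
        have e2 : K = r ^ (-β) * Real.exp (-(Q / 2) * r + -(W * r)) := by
          rw [hK, Real.exp_add]; ring
        rw [e1, e2]
        have hpow : s ^ (-β) ≤ r ^ (-β) := by
          rw [Real.rpow_neg hr0.le, Real.rpow_neg hs0.le]
          exact inv_anti₀ (Real.rpow_pos_of_pos hr0 β)
            (Real.rpow_le_rpow hr0.le hsr.le (by linarith))
        have hexp : Real.exp (-((Q + 1) / 2) * s + -(W * s) + s - r / 2)
            ≤ Real.exp (-(Q / 2) * r + -(W * r)) := by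
          apply Real.exp_le_exp.2
          nlinarith [mul_nonneg hc (sub_nonneg.2 hsr.le)]
        exact mul_le_mul hpow hexp (Real.exp_pos _).le (Real.rpow_nonneg hr0.le _)
      have : F s = (|g s| * Real.exp s / Real.exp (r / 2)) / Real.sqrt (s - r) := by
        simp [hF, div_div]
      rw [this]
      simp only [hG]
      rw [hrpow, mul_one_div]
      gcongr
  by_cases hFi : IntervalIntegrable F volume r (h : ℝ)
  · have hne : ∀ᵐ s : ℝ, s ≠ (h : ℝ) := by
      rw [MeasureTheory.ae_iff]
      simp only [not_not]
      have : {s : ℝ | s = (h : ℝ)} = {(h : ℝ)} := rfl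
      rw [this, Real.volume_singleton]
    have hne' : ∀ᵐ s ∂(MeasureTheory.volume.restrict (Set.Icc r (h : ℝ))), s ≠ (h : ℝ) :=
      hne.filter_mono (MeasureTheory.ae_mono MeasureTheory.Measure.restrict_le_self)
    have hae : ∀ᵐ s ∂(MeasureTheory.volume.restrict (Set.Icc r (h : ℝ))), F s ≤ G s := by
      filter_upwards [MeasureTheory.ae_restrict_mem measurableSet_Icc, hne'] with s hs hsne
      exact key s hs hsne
    have step := intervalIntegral.integral_mono_ae_restrict hrh hFi hGint hae
    have hGval : (∫ s in r..(h : ℝ), G s)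
        = K * (((h : ℝ) - r) ^ ((1:ℝ)/2) / (1/2)) := by
      rw [hG]
      rw [intervalIntegral.integral_const_mul]
      have := intervalIntegral.integral_comp_sub_right (fun x : ℝ => x ^ (-(1/2) : ℝ)) r
        (a := r) (b := (h : ℝ))
      rw [this, sub_self]
      rw [integral_rpow (Or.inl (by norm_num))]
      rw [Real.zero_rpow (by norm_num : (-(1/2) : ℝ) + 1 ≠ 0)]
      norm_num
    have hbound : ((h : ℝ) - r) ^ ((1:ℝ)/2) ≤ 3/2 := by
      have h1 : ((h : ℝ) - r) ^ ((1:ℝ)/2) ≤ (2 : ℝ) ^ ((1:ℝ)/2) :=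
        Real.rpow_le_rpow (by linarith) (by linarith) (by norm_num)
      have h2 : (2 : ℝ) ^ ((1:ℝ)/2) = Real.sqrt 2 := (Real.sqrt_eq_rpow 2).symm
      have h3 : Real.sqrt 2 ≤ 3/2 := by
        rw [show (3:ℝ)/2 = Real.sqrt ((3/2)^2) from (Real.sqrt_sq (by norm_num)).symm]
        exact Real.sqrt_le_sqrt (by norm_num)
      linarith [h1, h2 ▸ h1]
    calc (∫ s in r..(h : ℝ), F s) ≤ ∫ s in r..(h : ℝ), G s := step
      _ = K * (((h : ℝ) - r) ^ ((1:ℝ)/2) / (1/2)) := hGval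
      _ ≤ K * 3 := by
          apply mul_le_mul_of_nonneg_left ?_ hKpos.le
          rw [div_le_iff₀ (by norm_num : (0:ℝ) < 1/2)] at *
          linarith
      _ ≤ 3 * Real.exp (-(Q / 2) * r) * r ^ (-β) * Real.exp (-(W * r)) := by
          rw [hK]; ring_nf; exact le_refl _
  · rw [intervalIntegral.integral_undef hFi]
    positivity
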